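/- Let κ < 0 and N > 1 be real. (i) If h is an MCP(κ,N) density on the interval (a,∞) which is positive at every point of (a,∞), then for every x ∈ (a,∞) at which h is differentiable with derivative h'(x) one has h'(x)/h(x) ≥ −√(−κ·(N−1)). (ii) If h is an MCP(κ,N) density on the interval (−∞,b) which is positive at every point of (−∞,b), then for every x ∈ (−∞,b) at which h is differentiable with derivative h'(x) one has h'(x)/h(x) ≤ √(−κ·(N−1)). -/

import Mathlib

/-! With `p = 1/(N-1)` and `c = √(-κ/(N-1))`, the MCP inequality on the segment from `x₀` to
`x₁ > x₀` says that `h(y)^p` lies above `sinh(c(x₁-y))/sinh(c(x₁-x₀)) · h(x₀)^p`, with equality at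
`y = x₀`. Comparing right derivatives at `x₀` gives `p·h'/h ≥ -c·coth(c(x₁-x₀))`; on a half-line
`x₁` may tend to `∞`, where `coth → 1`. The bound on `(-∞,b)` follows by the reflection `y ↦ -y`. -/

open Set

/-- An `MCP(κ,N)` density on the set `I ⊆ ℝ`, for a constant negative curvature
parameter `κ`, with the explicit hyperbolic distortion coefficients. -/
def IsMCPNegDensity (κ N : ℝ) (I : Set ℝ) (h : ℝ → ℝ) : Prop :=
  (∀ x ∈ I, 0 ≤ h x) ∧
    ∀ x₀ ∈ I, ∀ x₁ ∈ I, x₀ ≠ x₁ → ∀ t ∈ Set.Icc (0 : ℝ) 1,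
      Real.sinh (Real.sqrt (-κ / (N - 1)) * ((1 - t) * |x₁ - x₀|)) /
          Real.sinh (Real.sqrt (-κ / (N - 1)) * |x₁ - x₀|) * h x₀ ^ (1 / (N - 1)) ≤
        h ((1 - t) * x₀ + t * x₁) ^ (1 / (N - 1))

open Filter Real Topology

theorem HasDerivAt.le_of_eventually_le_right {f g : ℝ → ℝ} {f' g' x : ℝ}
    (hf : HasDerivAt f f' x) (hg : HasDerivAt g g' x) (hx : g x = f x)
    (hle : ∀ᶠ y in 𝓝[>] x, g y ≤ f y) : g' ≤ f' := by
  have hslope : Tendsto (slope (f - g) x) (𝓝[>] x) (𝓝 (f' - g')) :=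
    (hasDerivAt_iff_tendsto_slope_left_right.1 (hf.sub hg)).2
  have hnonneg : ∀ᶠ y in 𝓝[>] x, 0 ≤ slope (f - g) x y := by
    filter_upwards [hle, self_mem_nhdsWithin] with y hy hxy
    rw [slope_def_field, Pi.sub_apply, Pi.sub_apply, hx, sub_self, sub_zero]
    exact div_nonneg (sub_nonneg.2 hy) (sub_nonneg.2 (le_of_lt hxy))
  exact sub_nonneg.1 (ge_of_tendsto hslope hnonneg)

theorem Real.tendsto_cosh_div_sinh_atTop : Tendsto (fun y => cosh y / sinh y) atTop (𝓝 1) := by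
  have hsinh : Tendsto sinh atTop atTop :=
    tendsto_atTop_mono' _ (eventually_ge_atTop 0 |>.mono fun y hy => self_le_sinh_iff.2 hy)
      tendsto_id
  have hdiff : Tendsto (fun y => exp (-y) * (sinh y)⁻¹) atTop (𝓝 (0 * 0)) :=
    tendsto_exp_neg_atTop_nhds_zero.mul (tendsto_inv_atTop_zero.comp hsinh)
  rw [mul_zero] at hdiff
  refine (hdiff.const_add 1).congr' ?_ |>.trans (by rw [add_zero])
  filter_upwards [eventually_gt_atTop 0] with y hy
  rw [← cosh_sub_sinh, add_comm]
  field_simp [(sinh_pos_iff.2 hy).ne']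
  ring

theorem Real.sqrt_mul_eq_mul_sqrt_div {k m : ℝ} (hm : 0 < m) : √(k * m) = m * √(k / m) := by
  rw [show k * m = k / m * m ^ 2 by field_simp, Real.sqrt_mul' _ (sq_nonneg m),
    Real.sqrt_sq hm.le, mul_comm]

namespace IsMCPNegDensity

variable {κ N : ℝ} {I : Set ℝ} {h : ℝ → ℝ}

theorem comp_neg (hh : IsMCPNegDensity κ N I h) : IsMCPNegDensity κ N (-I) (fun y => h (-y)) := by
  refine ⟨fun y hy => hh.1 (-y) hy, fun y₀ hy₀ y₁ hy₁ hne t ht => ?_⟩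
  have key := hh.2 (-y₀) hy₀ (-y₁) hy₁ (neg_injective.ne hne) t ht
  rwa [← neg_sub', abs_neg, mul_neg, mul_neg, ← neg_add] at key

theorem sinh_div_sinh_mul_rpow_le (hh : IsMCPNegDensity κ N I h) {x₀ x₁ y : ℝ} (hx₀ : x₀ ∈ I)
    (hx₁ : x₁ ∈ I) (hlt : x₀ < x₁) (hy : y ∈ Icc x₀ x₁) :
    sinh (√(-κ / (N - 1)) * (x₁ - y)) / sinh (√(-κ / (N - 1)) * (x₁ - x₀)) *
        h x₀ ^ (1 / (N - 1)) ≤ h y ^ (1 / (N - 1)) := by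
  have hL : 0 < x₁ - x₀ := sub_pos.2 hlt
  have ht : (y - x₀) / (x₁ - x₀) ∈ Icc (0 : ℝ) 1 :=
    ⟨div_nonneg (sub_nonneg.2 hy.1) hL.le, div_le_one_of_le₀ (by linarith [hy.2]) hL.le⟩
  have key := hh.2 x₀ hx₀ x₁ hx₁ hlt.ne _ ht
  have hlen : (1 - (y - x₀) / (x₁ - x₀)) * |x₁ - x₀| = x₁ - y := by
    rw [abs_of_pos hL]; field_simp; ring
  have hpt : (1 - (y - x₀) / (x₁ - x₀)) * x₀ + (y - x₀) / (x₁ - x₀) * x₁ = y := by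
    field_simp; ring
  rwa [hlen, hpt, abs_of_pos hL] at key

theorem neg_mul_coth_le_log_deriv (hh : IsMCPNegDensity κ N I h) (hκ : κ < 0) (hN : 1 < N)
    {x₀ x₁ d : ℝ} (hx₀ : x₀ ∈ I) (hx₁ : x₁ ∈ I) (hlt : x₀ < x₁) (hpos : 0 < h x₀)
    (hd : HasDerivAt h d x₀) :
    -((N - 1) * √(-κ / (N - 1)) *
        (cosh (√(-κ / (N - 1)) * (x₁ - x₀)) / sinh (√(-κ / (N - 1)) * (x₁ - x₀)))) ≤
      d / h x₀ := by
  set c := √(-κ / (N - 1))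
  set p := 1 / (N - 1)
  set L := x₁ - x₀
  have hN1 : 0 < N - 1 := sub_pos.2 hN
  have hc : 0 < c := sqrt_pos.2 (div_pos (neg_pos.2 hκ) hN1)
  have hS : 0 < sinh (c * L) := sinh_pos_iff.2 (mul_pos hc (sub_pos.2 hlt))
  have hF : HasDerivAt (fun y => h y ^ p) (p * (d / h x₀) * h x₀ ^ p) x₀ :=
    (hd.rpow_const (Or.inl hpos.ne')).congr_deriv (by rw [rpow_sub_one hpos.ne']; ring)
  have hψ : HasDerivAt (fun y => sinh (c * (x₁ - y)) / sinh (c * L) * h x₀ ^ p)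
      (-(c * (cosh (c * L) / sinh (c * L))) * h x₀ ^ p) x₀ := by
    refine ((((hasDerivAt_id' x₀).const_sub x₁).const_mul c).sinh.div_const (sinh (c * L))
      |>.mul_const (h x₀ ^ p)).congr_deriv ?_
    ring
  have hcomp := hF.le_of_eventually_le_right hψ (by simp [L, hS.ne']) <| by
    filter_upwards [Ioo_mem_nhdsGT hlt] with y hy
    exact hh.sinh_div_sinh_mul_rpow_le hx₀ hx₁ hlt (Ioo_subset_Icc_self hy)
  have hcoth : -(c * (cosh (c * L) / sinh (c * L))) ≤ p * (d / h x₀) :=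
    le_of_mul_le_mul_right hcomp (rpow_pos_of_pos hpos p)
  calc -((N - 1) * c * (cosh (c * L) / sinh (c * L)))
      = (N - 1) * -(c * (cosh (c * L) / sinh (c * L))) := by ring
    _ ≤ (N - 1) * (p * (d / h x₀)) := mul_le_mul_of_nonneg_left hcoth hN1.le
    _ = d / h x₀ := by simp only [p]; field_simp

theorem neg_sqrt_le_log_deriv_of_Ioi {a x d : ℝ} (hh : IsMCPNegDensity κ N (Ioi a) h)
    (hκ : κ < 0) (hN : 1 < N) (hx : x ∈ Ioi a) (hpos : 0 < h x) (hd : HasDerivAt h d x) :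
    -√(-κ * (N - 1)) ≤ d / h x := by
  have hc : 0 < √(-κ / (N - 1)) := sqrt_pos.2 (div_pos (neg_pos.2 hκ) (sub_pos.2 hN))
  have hlim : Tendsto (fun x₁ => -((N - 1) * √(-κ / (N - 1)) *
      (cosh (√(-κ / (N - 1)) * (x₁ - x)) / sinh (√(-κ / (N - 1)) * (x₁ - x))))) atTop
      (𝓝 (-((N - 1) * √(-κ / (N - 1)) * 1))) :=
    ((tendsto_cosh_div_sinh_atTop.comp
      ((tendsto_atTop_add_const_right _ (-x) tendsto_id).const_mul_atTop hc)).const_mul _).neg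
  rw [sqrt_mul_eq_mul_sqrt_div (sub_pos.2 hN), ← mul_one ((N - 1) * _)]
  refine le_of_tendsto hlim ?_
  filter_upwards [eventually_gt_atTop x] with x₁ hx₁
  exact hh.neg_mul_coth_le_log_deriv hκ hN hx (lt_trans hx hx₁) hx₁ hpos hd

theorem log_deriv_le_sqrt_of_Iio {b x d : ℝ} (hh : IsMCPNegDensity κ N (Iio b) h)
    (hκ : κ < 0) (hN : 1 < N) (hx : x ∈ Iio b) (hpos : 0 < h x) (hd : HasDerivAt h d x) :
    d / h x ≤ √(-κ * (N - 1)) := by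
  have hrefl : IsMCPNegDensity κ N (Ioi (-b)) (fun y => h (-y)) := neg_Iio b ▸ hh.comp_neg
  have hd' : HasDerivAt (fun y => h (-y)) (-d) (-x) :=
    (((neg_neg x).symm ▸ hd).comp (-x) (hasDerivAt_neg (-x))).congr_deriv (mul_neg_one d)
  have key := hrefl.neg_sqrt_le_log_deriv_of_Ioi hκ hN (mem_Ioi.2 (neg_lt_neg hx)) (by simpa) hd'
  rwa [neg_neg, neg_div, neg_le_neg_iff] at key

end IsMCPNegDensity

/-- Logarithmic derivative bounds for `MCP(κ,N)` densities (`κ < 0`) on half-infinite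
intervals: on `(a,∞)` one has `h'/h ≥ -√(-κ(N-1))`, and on `(-∞,b)` one has
`h'/h ≤ √(-κ(N-1))`, at every differentiability point. -/
theorem mcp_neg_density_halfline_log_deriv_bounds (κ N : ℝ)
    (hκ : κ < 0) (hN : 1 < N) :
    (∀ (a : ℝ) (h : ℝ → ℝ), IsMCPNegDensity κ N (Set.Ioi a) h →
      (∀ x ∈ Set.Ioi a, 0 < h x) →
      ∀ x ∈ Set.Ioi a, ∀ d : ℝ, HasDerivAt h d x →
        -Real.sqrt (-κ * (N - 1)) ≤ d / h x) ∧
    (∀ (b : ℝ) (h : ℝ → ℝ), IsMCPNegDensity κ N (Set.Iio b) h →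
      (∀ x ∈ Set.Iio b, 0 < h x) →
      ∀ x ∈ Set.Iio b, ∀ d : ℝ, HasDerivAt h d x →
        d / h x ≤ Real.sqrt (-κ * (N - 1))) :=
  ⟨fun _ _ hh hpos x hx _ hd => hh.neg_sqrt_le_log_deriv_of_Ioi hκ hN hx (hpos x hx) hd,
    fun _ _ hh hpos x hx _ hd => hh.log_deriv_le_sqrt_of_Iio hκ hN hx (hpos x hx) hd⟩
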